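/- Let V be a Volterra quadratic stochastic operator on S^{m-1} and let x ∈ S^{m-1} be a point that is not a fixed point of V. Then the ω-limit set of the trajectory (V^n x)_{n≥0} is contained in the boundary ∂S^{m-1} of the simplex, i.e. every accumulation point y of the sequence (V^n x) satisfies y_1 y_2 ⋯ y_m = 0. -/

import Mathlib

/-!
A Volterra operator has the canonical form `(V x)_k = x_k (1 + (A x)_k)` with `A` skew-symmetric
and `A ≥ -1` entrywise. A vanishing coordinate stays zero, so a trajectory starting on the
boundary stays there, and so do its limit points. For an interior trajectory, a weighted log-sum
`∑ w_k log x_k` with `w ≥ 0` and `A w ≥ 0` decreases along the orbit, because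
`log (1 + t) ≤ t` and `w ⬝ A x = -(x ⬝ A w)`. Tucker's theorem for skew-symmetric matrices
(a consequence of Farkas' lemma) provides such a weight `q` in the simplex with `q + A q > 0`.
If a limit point `y` were interior, the decrease would vanish at `y`; this forces `A q = 0`, hence
`q > 0`, and then `A y = 0`. So `y` is a fixed point and `∑ y_k log x_k` is itself a Lyapunov
function; its limit along the subsequence is `∑ y_k log y_k`, so Gibbs' inequality is an equality
at the initial point, that is `x = y`, contradicting that `x` is not fixed.
-/

/-- The map of a quadratic stochastic operator given by coefficients `p`. -/
noncomputable def qsoMap {m : ℕ} (p : Fin m → Fin m → Fin m → ℝ) (x : Fin m → ℝ) :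
    Fin m → ℝ :=
  fun k => ∑ i, ∑ j, p i j k * x i * x j

open Matrix Filter Topology

section Farkas

variable {ι : Type*} [Fintype ι]

lemma dotProduct_self_pos {c : ι → ℝ} (hc : c ≠ 0) : 0 < c ⬝ᵥ c :=
  (Fintype.sum_nonneg fun i => mul_self_nonneg (c i)).lt_of_ne
    (Ne.symm (mt dotProduct_self_eq_zero.mp hc))

lemma dotProduct_smul_sub_smul_eq (u v v' a : ι → ℝ) :
    u ⬝ᵥ ((a ⬝ᵥ v) • v' - (a ⬝ᵥ v') • v) = ((a ⬝ᵥ v) • u - (u ⬝ᵥ v) • a) ⬝ᵥ v' := by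
  simp only [dotProduct_sub, sub_dotProduct, dotProduct_smul, smul_dotProduct, smul_eq_mul]
  rw [dotProduct_comm a v']
  ring

theorem farkas_fin (N : ℕ) (w : Fin N → ι → ℝ) (c : ι → ℝ) :
    (∃ μ : Fin N → ℝ, 0 ≤ μ ∧ ∑ i, μ i • w i = c) ∨
      ∃ v, (∀ i, w i ⬝ᵥ v ≤ 0) ∧ 0 < c ⬝ᵥ v := by
  induction N generalizing c with
  | zero =>
    by_cases hc : c = 0
    · exact .inl ⟨0, le_rfl, by simp [hc]⟩
    · exact .inr ⟨c, finZeroElim, dotProduct_self_pos hc⟩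
  | succ N ih =>
    set a := w (Fin.last N)
    rcases ih (fun i => w i.castSucc) c with ⟨μ, hμ, hc⟩ | ⟨v, hv, hcv⟩
    · refine .inl ⟨Fin.snoc μ 0, fun i => ?_, by simp [Fin.sum_univ_castSucc, hc]⟩
      induction i using Fin.lastCases with
      | last => simp
      | cast i => simpa using hμ i
    by_cases hav : a ⬝ᵥ v ≤ 0
    · exact .inr ⟨v, fun i => Fin.lastCases hav hv i, hcv⟩
    push Not at hav
    set β := a ⬝ᵥ v
    -- Project along `a` onto the hyperplane `v ⬝ᵥ · = 0`, then apply the induction hypothesis.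
    let P : (ι → ℝ) → ι → ℝ := fun u => β • u - (u ⬝ᵥ v) • a
    rcases ih (fun i => P (w i.castSucc)) (P c) with ⟨μ, hμ, hc⟩ | ⟨v', hv', hcv'⟩
    · set t := ∑ i, μ i * (w i.castSucc ⬝ᵥ v)
      set γ := (c ⬝ᵥ v - t) / β
      have hγ : 0 ≤ γ := by
        refine div_nonneg (sub_nonneg.mpr ?_) hav.le
        exact (Finset.sum_nonpos fun i _ => mul_nonpos_of_nonneg_of_nonpos (hμ i) (hv i)).trans
          hcv.le
      have hPsum : ∑ i, μ i • P (w i.castSucc) = β • ∑ i, μ i • w i.castSucc - t • a := by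
        simp only [P, smul_sub, Finset.sum_sub_distrib, Finset.smul_sum, smul_smul, t,
          Finset.sum_smul, mul_comm]
      have hβc : β • (c - (∑ i, μ i • w i.castSucc + γ • a)) = 0 := by
        rw [hPsum] at hc
        rw [smul_sub, smul_add, smul_smul, mul_div_cancel₀ _ hav.ne']
        linear_combination (norm := module) -hc
      refine .inl ⟨Fin.snoc μ γ, fun i => ?_, ?_⟩
      · induction i using Fin.lastCases with
        | last => simpa using hγ
        | cast i => simpa using hμ i
      · rw [Fin.sum_univ_castSucc]
        simp only [Fin.snoc_castSucc, Fin.snoc_last]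
        exact (sub_eq_zero.mp ((smul_eq_zero.mp hβc).resolve_left hav.ne')).symm
    · refine .inr ⟨β • v' - (a ⬝ᵥ v') • v, fun i => ?_, ?_⟩
      · induction i using Fin.lastCases with
        | last => exact (dotProduct_smul_sub_smul_eq _ _ _ _).trans_le (by simp [a])
        | cast i => exact (dotProduct_smul_sub_smul_eq _ _ _ _).trans_le (hv' i)
      · exact hcv'.trans_eq (dotProduct_smul_sub_smul_eq _ _ _ _).symm

theorem farkas {κ : Type*} [Fintype κ] (w : κ → ι → ℝ) (c : ι → ℝ) :
    (∃ μ : κ → ℝ, 0 ≤ μ ∧ ∑ i, μ i • w i = c) ∨ ∃ v, (∀ i, w i ⬝ᵥ v ≤ 0) ∧ 0 < c ⬝ᵥ v := by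
  let e := Fintype.equivFin κ
  rcases farkas_fin _ (w ∘ e.symm) c with ⟨μ, hμ, hc⟩ | ⟨v, hv, hcv⟩
  · exact .inl ⟨μ ∘ e, fun i => hμ (e i), by rw [← hc, ← e.symm.sum_comp]; simp⟩
  · exact .inr ⟨v, fun i => by simpa using hv (e i), hcv⟩

end Farkas

section Tucker

variable {ι : Type*} [Fintype ι]

lemma mulVec_eq_neg_vecMul {A : Matrix ι ι ℝ} (hA : Aᵀ = -A) (x : ι → ℝ) :
    A *ᵥ x = -(x ᵥ* A) := by
  rw [← vecMul_transpose, hA, vecMul_neg]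

lemma exists_nonneg_mulVec_nonneg_pos_at [DecidableEq ι] {A : Matrix ι ι ℝ} (hA : Aᵀ = -A)
    (k : ι) : ∃ x, 0 ≤ x ∧ 0 ≤ A *ᵥ x ∧ 0 < x k + (A *ᵥ x) k := by
  -- Cone generated by the rows of `A` and the unit vectors, against `-e_k`: a representation
  -- gives `A μ ≥ e_k` by skew-symmetry, a separating vector `v` gives `x = -v`.
  rcases farkas (Sum.elim (fun i => A i) (fun i => Pi.single i 1)) (-Pi.single k 1) with
    ⟨μ, hμ, hc⟩ | ⟨v, hv, hkv⟩
  · have hAμ : A *ᵥ (fun i => μ (.inl i)) = (fun i => μ (.inr i)) + Pi.single k 1 := by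
      simp only [Fintype.sum_sum_type, Sum.elim_inl, Sum.elim_inr, ← vecMul_eq_sum] at hc
      rw [← pi_eq_sum_univ' (fun i => μ (.inr i))] at hc
      rw [mulVec_eq_neg_vecMul hA]
      linear_combination (norm := module) -hc
    refine ⟨fun i => μ (.inl i), fun i => hμ _, ?_, ?_⟩
    · rw [hAμ]; exact add_nonneg (fun i => hμ _) (by simp [Pi.single_nonneg])
    · rw [hAμ]
      have h1 : 0 ≤ μ (.inl k) := hμ _
      have h2 : 0 ≤ μ (.inr k) := hμ _
      simp only [Pi.add_apply, Pi.single_eq_same]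
      linarith
  · refine ⟨-v, fun i => ?_, fun i => ?_, ?_⟩
    · simpa using hv (.inr i)
    · have : (A *ᵥ v) i ≤ 0 := hv (.inl i)
      simpa [mulVec_neg] using this
    · have : (A *ᵥ v) k ≤ 0 := hv (.inl k)
      simp only [neg_dotProduct, single_one_dotProduct] at hkv
      simp only [Pi.neg_apply, mulVec_neg]
      linarith

theorem exists_mem_stdSimplex_mulVec_nonneg [Nonempty ι] {A : Matrix ι ι ℝ} (hA : Aᵀ = -A) :
    ∃ q ∈ stdSimplex ℝ ι, 0 ≤ A *ᵥ q ∧ ∀ k, 0 < q k + (A *ᵥ q) k := by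
  classical
  choose x hx hAx hxk using exists_nonneg_mulVec_nonneg_pos_at hA
  set X := ∑ j, x j
  have hX : 0 ≤ X := Finset.sum_nonneg fun j _ => hx j
  have hAX : 0 ≤ A *ᵥ X := by
    rw [mulVec_sum]
    exact Finset.sum_nonneg fun j _ => hAx j
  have hXk (k : ι) : 0 < X k + (A *ᵥ X) k := by
    simp only [X, mulVec_sum, Finset.sum_apply, ← Finset.sum_add_distrib]
    exact (hxk k).trans_le
      (Finset.single_le_sum (fun j _ => add_nonneg (hx j k) (hAx j k)) (Finset.mem_univ k))
  obtain ⟨i, hi⟩ : ∃ i, X i ≠ 0 := Function.ne_iff.mp fun h => by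
    simpa [h, ← Pi.zero_def] using hXk (Classical.arbitrary ι)
  have hs : 0 < ∑ i, X i :=
    Finset.sum_pos' (fun i _ => hX i) ⟨i, Finset.mem_univ i, (hX i).lt_of_ne' hi⟩
  refine ⟨(∑ i, X i)⁻¹ • X, ⟨fun i => ?_, ?_⟩, ?_, fun k => ?_⟩
  · exact smul_nonneg (inv_nonneg.mpr hs.le) (hX i)
  · simp [← Finset.mul_sum, hs.ne']
  · rw [mulVec_smul]
    exact smul_nonneg (inv_nonneg.mpr hs.le) hAX
  · simpa [mulVec_smul, ← mul_add, hs] using hXk k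

end Tucker

lemma eq_one_of_sum_mul_sub_one_le_sum_mul_log {ι : Type*} [Fintype ι] {w t : ι → ℝ}
    (hw : 0 ≤ w) (ht : ∀ k, 0 < t k)
    (h : ∑ k, w k * (t k - 1) ≤ ∑ k, w k * Real.log (t k)) {k : ι} (hk : 0 < w k) :
    t k = 1 := by
  have hgap (j : ι) : 0 ≤ w j * (t j - 1 - Real.log (t j)) :=
    mul_nonneg (hw j) (by linarith [Real.log_le_sub_one_of_pos (ht j)])
  have hsum : ∑ j, w j * (t j - 1 - Real.log (t j)) = 0 := by
    refine le_antisymm ?_ (Finset.sum_nonneg fun j _ => hgap j)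
    simpa [mul_sub, Finset.sum_sub_distrib] using h
  have hk0 := (Finset.sum_eq_zero_iff_of_nonneg fun j _ => hgap j).mp hsum k (Finset.mem_univ k)
  have hgapk : t k - 1 - Real.log (t k) = 0 := (mul_eq_zero.mp hk0).resolve_left hk.ne'
  by_contra hne
  linarith [Real.log_lt_sub_one_of_pos (ht k) hne]

lemma tendsto_sub_of_antitone_of_tendsto_subseq {F : ℕ → ℝ} (hF : Antitone F) {φ : ℕ → ℕ}
    (hφ : StrictMono φ) {L : ℝ} (hL : Tendsto (F ∘ φ) atTop (𝓝 L)) :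
    Tendsto (fun n => F (φ n + 1) - F (φ n)) atTop (𝓝 0) := by
  have hsucc : Tendsto (fun n => F (φ n + 1)) atTop (𝓝 L) :=
    tendsto_of_tendsto_of_tendsto_of_le_of_le (hL.comp (tendsto_add_atTop_nat 1)) hL
      (fun n => hF (hφ (Nat.lt_succ_self n))) (fun n => hF (Nat.le_succ _))
  simpa using hsucc.sub hL

lemma tendsto_sum_mul_log {ι α : Type*} [Fintype ι] {l : Filter α} {f : α → ι → ℝ} {y : ι → ℝ}
    (hf : Tendsto f l (𝓝 y)) (hy : ∀ k, y k ≠ 0) (w : ι → ℝ) :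
    Tendsto (fun n => ∑ k, w k * Real.log (f n k)) l (𝓝 (∑ k, w k * Real.log (y k))) :=
  tendsto_finsetSum _ fun k _ => ((tendsto_pi_nhds.mp hf k).log (hy k)).const_mul (w k)

section VolterraMap

variable {ι : Type*} [Fintype ι] {A : Matrix ι ι ℝ}

variable (A) in
def volterraMap (z : ι → ℝ) : ι → ℝ := fun k => z k * (1 + (A *ᵥ z) k)

lemma dotProduct_mulVec_eq_neg (hA : Aᵀ = -A) (v w : ι → ℝ) :
    v ⬝ᵥ (A *ᵥ w) = -(w ⬝ᵥ (A *ᵥ v)) := by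
  rw [dotProduct_mulVec, dotProduct_comm, mulVec_eq_neg_vecMul hA v, dotProduct_neg, neg_neg]

lemma dotProduct_mulVec_self_eq_zero (hA : Aᵀ = -A) (v : ι → ℝ) : v ⬝ᵥ (A *ᵥ v) = 0 := by
  linarith [dotProduct_mulVec_eq_neg hA v v]

lemma le_one_add_mulVec (hA : Aᵀ = -A) (hA1 : ∀ i j, -1 ≤ A i j) {z : ι → ℝ}
    (hz : z ∈ stdSimplex ℝ ι) (k : ι) : z k ≤ 1 + (A *ᵥ z) k := by
  have hAkk : A k k = 0 := by linarith [show A k k = -A k k by simpa using congrFun₂ hA k k]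
  have hsum : 1 + (A *ᵥ z) k = ∑ j, (1 + A k j) * z j := by
    simp only [mulVec, dotProduct, add_mul, one_mul, Finset.sum_add_distrib, hz.2]
  rw [hsum]
  simpa [hAkk] using Finset.single_le_sum (f := fun j => (1 + A k j) * z j)
    (fun j _ => mul_nonneg (by linarith [hA1 k j]) (hz.1 j)) (Finset.mem_univ k)

lemma volterraMap_mem_stdSimplex (hA : Aᵀ = -A) (hA1 : ∀ i j, -1 ≤ A i j) {z : ι → ℝ}
    (hz : z ∈ stdSimplex ℝ ι) : volterraMap A z ∈ stdSimplex ℝ ι := by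
  refine ⟨fun k => mul_nonneg (hz.1 k) ((hz.1 k).trans (le_one_add_mulVec hA hA1 hz k)), ?_⟩
  have := dotProduct_mulVec_self_eq_zero hA z
  simp only [dotProduct] at this
  simp [volterraMap, mul_add, Finset.sum_add_distrib, hz.2, this]

lemma volterraMap_iterate_mem_stdSimplex (hA : Aᵀ = -A) (hA1 : ∀ i j, -1 ≤ A i j)
    {z : ι → ℝ} (hz : z ∈ stdSimplex ℝ ι) (n : ℕ) :
    (volterraMap A)^[n] z ∈ stdSimplex ℝ ι :=
  Set.MapsTo.iterate (fun _ => volterraMap_mem_stdSimplex hA hA1) n hz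

lemma volterraMap_iterate_apply_eq_zero {z : ι → ℝ} {k : ι} (hz : z k = 0) (n : ℕ) :
    (volterraMap A)^[n] z k = 0 := by
  induction n with
  | zero => exact hz
  | succ n ih => rw [Function.iterate_succ_apply', volterraMap, ih, zero_mul]

lemma volterraMap_iterate_apply_pos (hA : Aᵀ = -A) (hA1 : ∀ i j, -1 ≤ A i j) {z : ι → ℝ}
    (hz : z ∈ stdSimplex ℝ ι) {k : ι} (hk : 0 < z k) (n : ℕ) :
    0 < (volterraMap A)^[n] z k := by
  induction n with
  | zero => exact hk
  | succ n ih =>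
    rw [Function.iterate_succ_apply']
    exact mul_pos ih (ih.trans_le (le_one_add_mulVec hA hA1
      (volterraMap_iterate_mem_stdSimplex hA hA1 hz n) k))

lemma mem_stdSimplex_of_tendsto_iterate (hA : Aᵀ = -A) (hA1 : ∀ i j, -1 ≤ A i j)
    {x y : ι → ℝ} (hx : x ∈ stdSimplex ℝ ι) {φ : ℕ → ℕ}
    (hy : Tendsto (fun n => (volterraMap A)^[φ n] x) atTop (𝓝 y)) : y ∈ stdSimplex ℝ ι :=
  (isClosed_stdSimplex ℝ ι).mem_of_tendsto hy
    (Eventually.of_forall fun n => volterraMap_iterate_mem_stdSimplex hA hA1 hx (φ n))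

lemma sum_mul_log_volterraMap (hA : Aᵀ = -A) (hA1 : ∀ i j, -1 ≤ A i j) {z : ι → ℝ}
    (hz : z ∈ stdSimplex ℝ ι) (hpos : ∀ k, 0 < z k) (w : ι → ℝ) :
    ∑ k, w k * Real.log (volterraMap A z k) =
      ∑ k, w k * Real.log (z k) + ∑ k, w k * Real.log (1 + (A *ᵥ z) k) := by
  rw [← Finset.sum_add_distrib]
  refine Finset.sum_congr rfl fun k _ => ?_
  rw [volterraMap, Real.log_mul (hpos k).ne'
    ((hpos k).trans_le (le_one_add_mulVec hA hA1 hz k)).ne', mul_add]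

lemma sum_mul_log_one_add_mulVec_le (hA : Aᵀ = -A) (hA1 : ∀ i j, -1 ≤ A i j) {z w : ι → ℝ}
    (hz : z ∈ stdSimplex ℝ ι) (hpos : ∀ k, 0 < z k) (hw : 0 ≤ w) :
    ∑ k, w k * Real.log (1 + (A *ᵥ z) k) ≤ -(z ⬝ᵥ (A *ᵥ w)) :=
  calc ∑ k, w k * Real.log (1 + (A *ᵥ z) k) ≤ ∑ k, w k * (A *ᵥ z) k :=
        Finset.sum_le_sum fun k _ => mul_le_mul_of_nonneg_left (by
          linarith [Real.log_le_sub_one_of_pos ((hpos k).trans_le (le_one_add_mulVec hA hA1 hz k))])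
          (hw k)
    _ = -(z ⬝ᵥ (A *ᵥ w)) := dotProduct_mulVec_eq_neg hA w z

lemma antitone_sum_mul_log_iterate (hA : Aᵀ = -A) (hA1 : ∀ i j, -1 ≤ A i j) {x w : ι → ℝ}
    (hx : x ∈ stdSimplex ℝ ι) (hxpos : ∀ k, 0 < x k) (hw : 0 ≤ w) (hAw : 0 ≤ A *ᵥ w) :
    Antitone fun n => ∑ k, w k * Real.log ((volterraMap A)^[n] x k) := by
  refine antitone_nat_of_succ_le fun n => ?_
  have hz := volterraMap_iterate_mem_stdSimplex hA hA1 hx n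
  have hpos k := volterraMap_iterate_apply_pos hA hA1 hx (hxpos k) n
  rw [Function.iterate_succ_apply', sum_mul_log_volterraMap hA hA1 hz hpos]
  linarith [sum_mul_log_one_add_mulVec_le hA hA1 hz hpos hw, dotProduct_nonneg_of_nonneg hz.1 hAw]

lemma sum_mul_log_one_add_mulVec_eq_zero_of_tendsto (hA : Aᵀ = -A) (hA1 : ∀ i j, -1 ≤ A i j)
    {x w y : ι → ℝ} (hx : x ∈ stdSimplex ℝ ι) (hxpos : ∀ k, 0 < x k) (hw : 0 ≤ w)
    (hAw : 0 ≤ A *ᵥ w) {φ : ℕ → ℕ} (hφ : StrictMono φ)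
    (hy : Tendsto (fun n => (volterraMap A)^[φ n] x) atTop (𝓝 y)) (hypos : ∀ k, 0 < y k) :
    ∑ k, w k * Real.log (1 + (A *ᵥ y) k) = 0 := by
  have hyS := mem_stdSimplex_of_tendsto_iterate hA hA1 hx hy
  have hF := antitone_sum_mul_log_iterate hA hA1 hx hxpos hw hAw
  have hdiff := tendsto_sub_of_antitone_of_tendsto_subseq hF hφ
    (tendsto_sum_mul_log hy (fun k => (hypos k).ne') w)
  have hAy : Tendsto (fun n => fun k => 1 + (A *ᵥ (volterraMap A)^[φ n] x) k) atTop
      (𝓝 fun k => 1 + (A *ᵥ y) k) :=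
    tendsto_pi_nhds.mpr fun k => tendsto_const_nhds.add
      ((((continuous_apply k).comp (continuous_const.matrix_mulVec continuous_id)).tendsto y).comp
        hy)
  refine tendsto_nhds_unique (tendsto_sum_mul_log hAy
    (fun k => ((hypos k).trans_le (le_one_add_mulVec hA hA1 hyS k)).ne') w) ?_
  refine hdiff.congr fun n => ?_
  simp only [Function.iterate_succ_apply']
  rw [sum_mul_log_volterraMap hA hA1 (volterraMap_iterate_mem_stdSimplex hA hA1 hx _)
    (fun k => volterraMap_iterate_apply_pos hA hA1 hx (hxpos k) _)]
  ring

theorem mulVec_eq_zero_of_tendsto_iterate (hA : Aᵀ = -A) (hA1 : ∀ i j, -1 ≤ A i j)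
    {x y : ι → ℝ} (hx : x ∈ stdSimplex ℝ ι) (hxpos : ∀ k, 0 < x k) {φ : ℕ → ℕ}
    (hφ : StrictMono φ) (hy : Tendsto (fun n => (volterraMap A)^[φ n] x) atTop (𝓝 y))
    (hypos : ∀ k, 0 < y k) : A *ᵥ y = 0 := by
  have : Nonempty ι := Finset.univ_nonempty_iff.mp
    (Finset.nonempty_of_sum_ne_zero (by rw [hx.2]; exact one_ne_zero))
  obtain ⟨q, hq, hAq, hqAq⟩ := exists_mem_stdSimplex_mulVec_nonneg hA
  have hyS := mem_stdSimplex_of_tendsto_iterate hA hA1 hx hy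
  have hg := sum_mul_log_one_add_mulVec_eq_zero_of_tendsto hA hA1 hx hxpos hq.1 hAq hφ hy hypos
  have hyAq : y ⬝ᵥ (A *ᵥ q) = 0 :=
    le_antisymm (by linarith [sum_mul_log_one_add_mulVec_le hA hA1 hyS hypos hq.1])
      (dotProduct_nonneg_of_nonneg hyS.1 hAq)
  have hqpos (k : ι) : 0 < q k := by
    have hk := (Finset.sum_eq_zero_iff_of_nonneg fun j _ => mul_nonneg (hyS.1 j) (hAq j)).mp
      hyAq k (Finset.mem_univ k)
    simpa [(mul_eq_zero.mp hk).resolve_left (hypos k).ne'] using hqAq k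
  have hqAy : q ⬝ᵥ (A *ᵥ y) = 0 := by rw [dotProduct_mulVec_eq_neg hA, hyAq, neg_zero]
  funext k
  have h1 := eq_one_of_sum_mul_sub_one_le_sum_mul_log hq.1 (t := fun k => 1 + (A *ᵥ y) k)
    (fun k => (hypos k).trans_le (le_one_add_mulVec hA hA1 hyS k))
    (by simp only [add_sub_cancel_left, hg]; exact hqAy.le) (hqpos k)
  simpa using h1

theorem eq_of_tendsto_iterate_of_mulVec_eq_zero (hA : Aᵀ = -A) (hA1 : ∀ i j, -1 ≤ A i j)
    {x y : ι → ℝ} (hx : x ∈ stdSimplex ℝ ι) (hxpos : ∀ k, 0 < x k) {φ : ℕ → ℕ}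
    (hφ : StrictMono φ) (hy : Tendsto (fun n => (volterraMap A)^[φ n] x) atTop (𝓝 y))
    (hypos : ∀ k, 0 < y k) (hAy : A *ᵥ y = 0) : x = y := by
  have hyS := mem_stdSimplex_of_tendsto_iterate hA hA1 hx hy
  have hF := antitone_sum_mul_log_iterate hA hA1 hx hxpos hyS.1 hAy.ge
  have hle : ∑ k, y k * Real.log (y k) ≤ ∑ k, y k * Real.log (x k) :=
    ((hF.comp_monotone hφ.monotone).le_of_tendsto
      (tendsto_sum_mul_log hy (fun k => (hypos k).ne') y) 0).trans (hF (Nat.zero_le _))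
  have hsub : ∑ k, y k * (x k / y k - 1) = 0 := by
    simp [mul_sub, mul_div_cancel₀ _ (hypos _).ne', Finset.sum_sub_distrib, hx.2, hyS.2]
  have hlog : ∑ k, y k * Real.log (x k / y k) =
      ∑ k, y k * Real.log (x k) - ∑ k, y k * Real.log (y k) := by
    simp [Real.log_div (hxpos _).ne' (hypos _).ne', mul_sub, Finset.sum_sub_distrib]
  funext k
  have h1 := eq_one_of_sum_mul_sub_one_le_sum_mul_log hyS.1 (t := fun k => x k / y k)
    (fun k => div_pos (hxpos k) (hypos k)) (by linarith) (hypos k)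
  exact (div_eq_one_iff_eq (hypos k).ne').mp h1

theorem prod_eq_zero_of_tendsto_volterraMap_iterate (hA : Aᵀ = -A) (hA1 : ∀ i j, -1 ≤ A i j)
    {x y : ι → ℝ} (hx : x ∈ stdSimplex ℝ ι) (hfix : volterraMap A x ≠ x) {φ : ℕ → ℕ}
    (hφ : StrictMono φ) (hy : Tendsto (fun n => (volterraMap A)^[φ n] x) atTop (𝓝 y)) :
    ∏ k, y k = 0 := by
  have hyS := mem_stdSimplex_of_tendsto_iterate hA hA1 hx hy
  by_contra hprod
  have hypos (k : ι) : 0 < y k :=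
    (hyS.1 k).lt_of_ne' fun hk => hprod (Finset.prod_eq_zero (Finset.mem_univ k) hk)
  have hxpos (k : ι) : 0 < x k := by
    refine (hx.1 k).lt_of_ne' fun hk => (hypos k).ne' (tendsto_nhds_unique
      (tendsto_pi_nhds.mp hy k) ?_)
    simp [volterraMap_iterate_apply_eq_zero hk]
  have hAy := mulVec_eq_zero_of_tendsto_iterate hA hA1 hx hxpos hφ hy hypos
  obtain rfl := eq_of_tendsto_iterate_of_mulVec_eq_zero hA hA1 hx hxpos hφ hy hypos hAy
  exact hfix (funext fun k => by simp [volterraMap, hAy])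

end VolterraMap

section VolterraQSO

variable {m : ℕ} {p : Fin m → Fin m → Fin m → ℝ}

-- Off the diagonal `p k j k - p k j j = 2 p k j k - 1`: the matrix `a` of the canonical form
-- `(V z)_k = z_k (1 + ∑_j a_kj z_j)` on the simplex.
variable (p) in
def volterraMatrix : Matrix (Fin m) (Fin m) ℝ := Matrix.of fun k j => p k j k - p k j j

lemma volterraMatrix_transpose (hsymm : ∀ i j k, p i j k = p j i k) :
    (volterraMatrix p)ᵀ = -volterraMatrix p := by
  ext i j
  simp [volterraMatrix, hsymm j i]

lemma neg_one_le_volterraMatrix (hnonneg : ∀ i j k, 0 ≤ p i j k) (hsum : ∀ i j, ∑ k, p i j k = 1)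
    (i j : Fin m) : -1 ≤ volterraMatrix p i j := by
  have hle : p i j j ≤ 1 :=
    (Finset.single_le_sum (fun l _ => hnonneg i j l) (Finset.mem_univ j)).trans_eq (hsum i j)
  simp only [volterraMatrix, of_apply]
  linarith [hnonneg i j i]

lemma volterra_coeff_self (hsum : ∀ i j, ∑ k, p i j k = 1)
    (hvol : ∀ i j k, k ≠ i → k ≠ j → p i j k = 0) (k : Fin m) : p k k k = 1 := by
  rw [← hsum k k, Fintype.sum_eq_single k fun l hl => hvol k k l hl hl]

lemma volterra_coeff_add (hsum : ∀ i j, ∑ k, p i j k = 1)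
    (hvol : ∀ i j k, k ≠ i → k ≠ j → p i j k = 0) {i k : Fin m} (hik : i ≠ k) :
    p i k i + p i k k = 1 := by
  rw [← hsum i k, Fintype.sum_eq_add i k hik fun l hl => hvol i k l hl.1 hl.2]

lemma qsoMap_eq_volterraMap (hsymm : ∀ i j k, p i j k = p j i k)
    (hsum : ∀ i j, ∑ k, p i j k = 1) (hvol : ∀ i j k, k ≠ i → k ≠ j → p i j k = 0)
    {z : Fin m → ℝ} (hz : ∑ k, z k = 1) : qsoMap p z = volterraMap (volterraMatrix p) z := by
  funext k
  have hrow (i : Fin m) : ∑ j, p i j k * z i * z j =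
      z k * ((if i = k then ∑ j, p k j k * z j else 0) + (1 - p k i i) * z i) := by
    by_cases hik : i = k
    · subst hik
      rw [if_pos rfl, volterra_coeff_self hsum hvol, sub_self, zero_mul, add_zero, Finset.mul_sum]
      exact Finset.sum_congr rfl fun j _ => by ring
    · rw [Fintype.sum_eq_single k fun j hj => by rw [hvol i j k (Ne.symm hik) (Ne.symm hj)]; ring,
        if_neg hik, ← volterra_coeff_add hsum hvol (Ne.symm hik), hsymm i k k]
      ring
  rw [qsoMap, Finset.sum_congr rfl fun i _ => hrow i, ← Finset.mul_sum, Finset.sum_add_distrib,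
    Finset.sum_ite_eq']
  simp only [Finset.mem_univ, if_true, volterraMap, mulVec, dotProduct, volterraMatrix, of_apply,
    sub_mul, one_mul, Finset.sum_sub_distrib, hz]
  ring

end VolterraQSO

theorem volterra_omega_limit_subset_boundary_general (m : ℕ)
    (p : Fin m → Fin m → Fin m → ℝ)
    (hsymm : ∀ i j k, p i j k = p j i k)
    (hnonneg : ∀ i j k, 0 ≤ p i j k)
    (hsum : ∀ i j, ∑ k, p i j k = 1)
    (hvol : ∀ i j k, k ≠ i → k ≠ j → p i j k = 0)
    (x : Fin m → ℝ) (hx : x ∈ stdSimplex ℝ (Fin m))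
    (hfix : qsoMap p x ≠ x)
    (y : Fin m → ℝ) (φ : ℕ → ℕ) (hφ : StrictMono φ)
    (hy : Filter.Tendsto (fun n => (qsoMap p)^[φ n] x) Filter.atTop (nhds y)) :
    ∏ i, y i = 0 := by
  have hA := volterraMatrix_transpose hsymm
  have hA1 := neg_one_le_volterraMatrix hnonneg hsum
  have hiter (n : ℕ) : (qsoMap p)^[n] x = (volterraMap (volterraMatrix p))^[n] x := by
    induction n with
    | zero => rfl
    | succ n ih =>
      rw [Function.iterate_succ_apply', Function.iterate_succ_apply', ih, qsoMap_eq_volterraMap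
        hsymm hsum hvol (volterraMap_iterate_mem_stdSimplex hA hA1 hx n).2]
  refine prod_eq_zero_of_tendsto_volterraMap_iterate hA hA1 hx ?_ hφ ?_
  · rwa [← qsoMap_eq_volterraMap hsymm hsum hvol hx.2]
  · simpa only [hiter] using hy

/-- If `x ∈ S^{m-1}` is not a fixed point of a Volterra quadratic stochastic
operator `V`, then every accumulation point `y` of the trajectory `(V^n x)` lies on the
boundary of the simplex, i.e. `y_1 ⋯ y_m = 0`. -/
theorem volterra_omega_limit_subset_boundary (m : ℕ) (hm : 1 ≤ m)
    (p : Fin m → Fin m → Fin m → ℝ)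
    (hsymm : ∀ i j k, p i j k = p j i k)
    (hnonneg : ∀ i j k, 0 ≤ p i j k)
    (hsum : ∀ i j, ∑ k, p i j k = 1)
    (hvol : ∀ i j k, k ≠ i → k ≠ j → p i j k = 0)
    (x : Fin m → ℝ) (hx : x ∈ stdSimplex ℝ (Fin m))
    (hfix : qsoMap p x ≠ x)
    (y : Fin m → ℝ) (φ : ℕ → ℕ) (hφ : StrictMono φ)
    (hy : Filter.Tendsto (fun n => (qsoMap p)^[φ n] x) Filter.atTop (nhds y)) :
    ∏ i, y i = 0 :=
  volterra_omega_limit_subset_boundary_general m p hsymm hnonneg hsum hvol x hx hfix y φ hφ hy
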